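/- arXiv:0806.2495 — 2 statements merged into one kernel-verified Lean document; each statement's English description precedes it below -/
import Mathlib

section
/- For a non-null triangle A1A2A3 in F² over a field F of characteristic ≠ 2, with quadrances Q1, Q2, Q3 and cross c3 = 1 - s3 where s3 is the spread at vertex A3, the cross law holds: (Q1+Q2-Q3)² = 4·Q1·Q2·c3. -/
/-- The quadrance between two points of `F × F`. -/
def quadrance {F : Type*} [Field F] (A B : F × F) : F :=
  (B.1 - A.1) ^ 2 + (B.2 - A.2) ^ 2

/-- The line `⟨a : b : c⟩` through two distinct points. -/
def lineThrough {F : Type*} [Field F] (A B : F × F) : F × F × F :=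
  (A.2 - B.2, B.1 - A.1, A.1 * B.2 - B.1 * A.2)

/-- A line `⟨a : b : c⟩` is null when `a^2 + b^2 = 0`. -/
def IsNullLine {F : Type*} [Field F] (l : F × F × F) : Prop :=
  l.1 ^ 2 + l.2.1 ^ 2 = 0

/-- The spread between two (non-null) lines. -/
def spread {F : Type*} [Field F] (l m : F × F × F) : F :=
  (l.1 * m.2.1 - m.1 * l.2.1) ^ 2 /
    ((l.1 ^ 2 + l.2.1 ^ 2) * (m.1 ^ 2 + m.2.1 ^ 2))

/-- Three points are collinear when they lie on a common line `a*x + b*y + c = 0`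
with `(a, b) ≠ (0, 0)`. -/
def CollinearPts {F : Type*} [Field F] (A1 A2 A3 : F × F) : Prop :=
  ∃ a b c : F, ¬(a = 0 ∧ b = 0) ∧
    a * A1.1 + b * A1.2 + c = 0 ∧
    a * A2.1 + b * A2.2 + c = 0 ∧
    a * A3.1 + b * A3.2 + c = 0

/-! With `u = A1 - A3` and `v = A2 - A3`, polarization gives `Q1 + Q2 - Q3 = 2 (u ⬝ v)`, while
Lagrange's identity `(u ⬝ v)² + (u × v)² = |u|² |v|²` turns the cross `1 - s3` into
`(u ⬝ v)² / (Q1 Q2)`. -/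

section RationalTrigonometry

variable {F : Type*} [Field F]

theorem quadrance_comm (A B : F × F) : quadrance A B = quadrance B A := by
  unfold quadrance; ring

theorem normSq_lineThrough (A B : F × F) :
    (lineThrough A B).1 ^ 2 + (lineThrough A B).2.1 ^ 2 = quadrance A B := by
  unfold lineThrough quadrance; ring

theorem isNullLine_lineThrough_iff (A B : F × F) :
    IsNullLine (lineThrough A B) ↔ quadrance A B = 0 := by
  rw [IsNullLine, normSq_lineThrough]

theorem quadrance_add_quadrance_sub_quadrance (A B C : F × F) :
    quadrance B C + quadrance A C - quadrance A B =
      2 * ((A.1 - C.1) * (B.1 - C.1) + (A.2 - C.2) * (B.2 - C.2)) := by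
  unfold quadrance; ring

theorem spread_lineThrough (A B C : F × F) :
    spread (lineThrough C A) (lineThrough C B) =
      ((A.1 - C.1) * (B.2 - C.2) - (A.2 - C.2) * (B.1 - C.1)) ^ 2 /
        (quadrance A C * quadrance B C) := by
  rw [spread, normSq_lineThrough, normSq_lineThrough, quadrance_comm C A, quadrance_comm C B]
  simp only [lineThrough]
  ring

theorem one_sub_spread_lineThrough {A B C : F × F} (hA : quadrance A C ≠ 0)
    (hB : quadrance B C ≠ 0) :
    1 - spread (lineThrough C A) (lineThrough C B) =
      ((A.1 - C.1) * (B.1 - C.1) + (A.2 - C.2) * (B.2 - C.2)) ^ 2 /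
        (quadrance A C * quadrance B C) := by
  rw [spread_lineThrough, eq_div_iff (mul_ne_zero hA hB), sub_mul, one_mul,
    div_mul_cancel₀ _ (mul_ne_zero hA hB)]
  unfold quadrance
  ring

end RationalTrigonometry

theorem cross_law_general {F : Type*} [Field F]
    (A1 A2 A3 : F × F)
    (hn1 : ¬ IsNullLine (lineThrough A2 A3))
    (hn2 : ¬ IsNullLine (lineThrough A1 A3))
    (Q1 Q2 Q3 s3 c3 : F)
    (hQ1 : Q1 = quadrance A2 A3) (hQ2 : Q2 = quadrance A1 A3)
    (hQ3 : Q3 = quadrance A1 A2)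
    (hs3 : s3 = spread (lineThrough A3 A1) (lineThrough A3 A2))
    (hc3 : c3 = 1 - s3) :
    (Q1 + Q2 - Q3) ^ 2 = 4 * Q1 * Q2 * c3 := by
  rw [isNullLine_lineThrough_iff] at hn1 hn2
  subst hQ1 hQ2 hQ3 hc3 hs3
  rw [quadrance_add_quadrance_sub_quadrance, one_sub_spread_lineThrough hn2 hn1]
  field_simp
  ring

/-- The cross law for a non-null triangle. -/
theorem cross_law {F : Type*} [Field F] (h2 : (2 : F) ≠ 0)
    (A1 A2 A3 : F × F) (hnc : ¬ CollinearPts A1 A2 A3)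
    (hn1 : ¬ IsNullLine (lineThrough A2 A3))
    (hn2 : ¬ IsNullLine (lineThrough A1 A3))
    (hn3 : ¬ IsNullLine (lineThrough A1 A2))
    (Q1 Q2 Q3 s3 c3 : F)
    (hQ1 : Q1 = quadrance A2 A3) (hQ2 : Q2 = quadrance A1 A3)
    (hQ3 : Q3 = quadrance A1 A2)
    (hs3 : s3 = spread (lineThrough A3 A1) (lineThrough A3 A2))
    (hc3 : c3 = 1 - s3) :
    (Q1 + Q2 - Q3) ^ 2 = 4 * Q1 * Q2 * c3 :=
  cross_law_general A1 A2 A3 hn1 hn2 Q1 Q2 Q3 s3 c3 hQ1 hQ2 hQ3 hs3 hc3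
end

section
/- For any two non-null lines l1, l2 in F² over a field of characteristic ≠ 2, the spread s = s(l1,l2) satisfies that s(1-s) is a square in F. -/
def cross {F : Type*} [Field F] (l m : F × F × F) : F :=
  (l.1 * m.1 + l.2.1 * m.2.1) ^ 2 /
    ((l.1 ^ 2 + l.2.1 ^ 2) * (m.1 ^ 2 + m.2.1 ^ 2))

theorem spread_add_cross {F : Type*} [Field F] {l m : F × F × F}
    (hl : ¬ IsNullLine l) (hm : ¬ IsNullLine m) : spread l m + cross l m = 1 := by
  rw [spread, cross, ← add_div, div_eq_one_iff_eq (mul_ne_zero hl hm),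
    sq_add_sq_mul_sq_add_sq]
  ring

theorem spread_mul_cross {F : Type*} [Field F] (l m : F × F × F) :
    spread l m * cross l m =
      ((l.1 * m.2.1 - m.1 * l.2.1) * (l.1 * m.1 + l.2.1 * m.2.1) /
        ((l.1 ^ 2 + l.2.1 ^ 2) * (m.1 ^ 2 + m.2.1 ^ 2))) ^ 2 := by
  rw [spread, cross]
  ring

theorem spread_number_general {F : Type*} [Field F]
    (l m : F × F × F) (hl : ¬ IsNullLine l) (hm : ¬ IsNullLine m) :
    ∃ r : F, spread l m * (1 - spread l m) = r ^ 2 := by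
  rw [← spread_add_cross hl hm, add_sub_cancel_left]
  exact ⟨_, spread_mul_cross l m⟩

/-- For any two non-null lines, `s * (1 - s)` is a square, where `s` is the spread. -/
theorem spread_number {F : Type*} [Field F] (h2 : (2 : F) ≠ 0)
    (l m : F × F × F) (hl : ¬ IsNullLine l) (hm : ¬ IsNullLine m) :
    ∃ r : F, spread l m * (1 - spread l m) = r ^ 2 :=
  spread_number_general l m hl hm
end
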